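/- For all H₁, H₂ ∈ (1/2, 1) and every t > 0, the kernel f_{H₁,H₂}(t,·,·) is square integrable on ℝ², i.e. ∫_ℝ ∫_ℝ ( ∫₀ᵗ K_{H₁,H₂}(s,x,y) ds )² dx dy < ∞. -/

import Mathlib

open MeasureTheory

/-- `u₊^p`: equals `u ^ p` (real power) if `u > 0`, and `0` otherwise. -/
noncomputable def plusPow (u p : ℝ) : ℝ := if 0 < u then u ^ p else 0

/-- The kernel `K_{H₁,H₂}(s,x,y)` of the generalized Rosenblatt process. -/
noncomputable def rosenblattK (H₁ H₂ s x y : ℝ) : ℝ :=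
  plusPow (s - x) (H₁ / 2 - 1) * plusPow (s - y) (H₂ / 2 - 1) +
  plusPow (s - x) (H₂ / 2 - 1) * plusPow (s - y) (H₁ / 2 - 1)

/-- `f_{H₁,H₂}(t,x,y) = ∫₀ᵗ K_{H₁,H₂}(s,x,y) ds`. -/
noncomputable def rosenblattF (H₁ H₂ t x y : ℝ) : ℝ :=
  ∫ s in (0:ℝ)..t, rosenblattK H₁ H₂ s x y

/-!
Write `a = H₁/2 - 1` and `b = H₂/2 - 1`, so that `a, b ∈ (-3/4, -1/2)`. Since `K ≥ 0` is the
sum of two products, `|f(t,x,y)| ≤ F_{a,b}(x,y) + F_{b,a}(x,y)`, where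
`F_{p,q}(x,y) = ∫_{Ι 0 t} (s-x)₊^p (s-y)₊^q ds`. Writing `F_{p,q}²` as a double integral in
`(s, r)` and integrating in `(x, y)` first, the `x`- and `y`-integrals separate, and
`∫ (s-x)₊^p (r-x)₊^p dx ≤ C_p |s-r|^(2p+1)` for `-1 < p < -1/2`. Hence
`‖F_{p,q}‖₂² ≤ C ∫∫_{(Ι 0 t)²} |s-r|^(2p+2q+2) ds dr`, which is finite because
`2a + 2b + 2 = H₁ + H₂ - 2 > -1`.
-/

open Set
open scoped ENNReal Interval

lemma plusPow_nonneg (u p : ℝ) : 0 ≤ plusPow u p := by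
  unfold plusPow
  split_ifs with h
  exacts [Real.rpow_nonneg h.le _, le_rfl]

lemma plusPow_of_pos {u : ℝ} (h : 0 < u) (p : ℝ) : plusPow u p = u ^ p := if_pos h

lemma plusPow_of_nonpos {u : ℝ} (h : u ≤ 0) (p : ℝ) : plusPow u p = 0 := if_neg h.not_gt

@[fun_prop]
lemma measurable_plusPow (p : ℝ) : Measurable fun u : ℝ => plusPow u p :=
  Measurable.ite measurableSet_Ioi (measurable_id.pow_const p) measurable_const

lemma setLIntegral_Ioc_plusPow_add_mul_plusPow_le {p q D : ℝ} (hp : p ≤ 0) (hq : -1 < q)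
    (hD : 0 < D) :
    ∫⁻ u in Ioc 0 D, ENNReal.ofReal (plusPow (D + u) p * plusPow u q)
      ≤ ENNReal.ofReal (D ^ (p + q + 1) / (q + 1)) := by
  have hint : IntegrableOn (fun u => D ^ p * u ^ q) (Ioc 0 D) :=
    (intervalIntegrable_iff_integrableOn_Ioc_of_le hD.le).1
      ((intervalIntegral.intervalIntegrable_rpow' hq).const_mul _)
  calc ∫⁻ u in Ioc 0 D, ENNReal.ofReal (plusPow (D + u) p * plusPow u q)
      ≤ ∫⁻ u in Ioc 0 D, ENNReal.ofReal (D ^ p * u ^ q) := by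
        refine setLIntegral_mono (by fun_prop) fun u hu => ENNReal.ofReal_le_ofReal ?_
        rw [plusPow_of_pos (by linarith [hu.1]), plusPow_of_pos hu.1]
        exact mul_le_mul_of_nonneg_right
          (Real.rpow_le_rpow_of_nonpos hD (by linarith [hu.1]) hp) (Real.rpow_nonneg hu.1.le _)
    _ = ENNReal.ofReal (∫ u in Ioc 0 D, D ^ p * u ^ q) :=
        (ofReal_integral_eq_lintegral_ofReal hint
          ((ae_restrict_iff' measurableSet_Ioc).2
            (.of_forall fun u hu => by have := hu.1; positivity))).symm
    _ = ENNReal.ofReal (D ^ (p + q + 1) / (q + 1)) := by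
        rw [integral_const_mul, ← intervalIntegral.integral_of_le hD.le,
          integral_rpow (Or.inl hq), Real.zero_rpow (by linarith), sub_zero, ← mul_div_assoc,
          ← Real.rpow_add hD, add_assoc]

lemma setLIntegral_Ioi_plusPow_add_mul_plusPow_le {p q D : ℝ} (hp : p ≤ 0) (hpq : p + q < -1)
    (hD : 0 < D) :
    ∫⁻ u in Ioi D, ENNReal.ofReal (plusPow (D + u) p * plusPow u q)
      ≤ ENNReal.ofReal (D ^ (p + q + 1) / -(p + q + 1)) := by
  calc ∫⁻ u in Ioi D, ENNReal.ofReal (plusPow (D + u) p * plusPow u q)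
      ≤ ∫⁻ u in Ioi D, ENNReal.ofReal (u ^ (p + q)) := by
        refine setLIntegral_mono (by fun_prop) fun u (hu : D < u) => ENNReal.ofReal_le_ofReal ?_
        have hu0 : 0 < u := hD.trans hu
        rw [plusPow_of_pos (by linarith), plusPow_of_pos hu0, Real.rpow_add hu0]
        exact mul_le_mul_of_nonneg_right (Real.rpow_le_rpow_of_nonpos hu0 (by linarith) hp)
          (Real.rpow_nonneg hu0.le _)
    _ = ENNReal.ofReal (∫ u in Ioi D, u ^ (p + q)) :=
        (ofReal_integral_eq_lintegral_ofReal (integrableOn_Ioi_rpow_of_lt hpq hD)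
          ((ae_restrict_iff' measurableSet_Ioi).2
            (.of_forall fun u (hu : D < u) => Real.rpow_nonneg (hD.trans hu).le _))).symm
    _ = ENNReal.ofReal (D ^ (p + q + 1) / -(p + q + 1)) := by
        rw [integral_Ioi_rpow_of_lt hpq hD, neg_div, div_neg]

/-- The two pieces are the regimes `u ≤ D`, where `(D + u)^p ≤ D^p`, and `u > D`, where
`(D + u)^p ≤ u^p`. -/
lemma lintegral_plusPow_add_mul_plusPow_le {p q D : ℝ} (hp : p ≤ 0) (hq : -1 < q)
    (hpq : p + q < -1) (hD : 0 < D) :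
    ∫⁻ u, ENNReal.ofReal (plusPow (D + u) p * plusPow u q)
      ≤ ENNReal.ofReal ((1 / (q + 1) + 1 / -(p + q + 1)) * D ^ (p + q + 1)) := by
  have hneg : ∫⁻ u in Iic 0, ENNReal.ofReal (plusPow (D + u) p * plusPow u q) = 0 :=
    (setLIntegral_congr_fun measurableSet_Iic fun u (hu : u ≤ 0) => by
      simp [plusPow_of_nonpos hu]).trans lintegral_zero
  rw [← lintegral_add_compl _ measurableSet_Iic, hneg, zero_add, compl_Iic,
    ← Ioc_union_Ioi_eq_Ioi hD.le, lintegral_union measurableSet_Ioi (Ioc_disjoint_Ioi le_rfl),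
    add_mul, one_div_mul_eq_div, one_div_mul_eq_div,
    ENNReal.ofReal_add (div_nonneg (by positivity) (by linarith))
      (div_nonneg (by positivity) (by linarith))]
  exact add_le_add (setLIntegral_Ioc_plusPow_add_mul_plusPow_le hp hq hD)
    (setLIntegral_Ioi_plusPow_add_mul_plusPow_le hp hpq hD)

/-- An upper bound for `B(p + 1, -2p - 1) = ∫₀^∞ (1 + u)^p u^p du`. -/
noncomputable def overlapConst (p : ℝ) : ℝ := 1 / (p + 1) + 1 / -(2 * p + 1)

lemma overlapConst_nonneg {p : ℝ} (hp : -1 < p) (hp' : p < -1 / 2) : 0 ≤ overlapConst p := by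
  have : 0 < p + 1 := by linarith
  have : 0 < -(2 * p + 1) := by linarith
  unfold overlapConst
  positivity

lemma lintegral_plusPow_sub_mul_plusPow_sub_le {p s r : ℝ} (hp : -1 < p) (hp' : p < -1 / 2)
    (hsr : s ≠ r) :
    ∫⁻ x, ENNReal.ofReal (plusPow (s - x) p) * ENNReal.ofReal (plusPow (r - x) p)
      ≤ ENNReal.ofReal (overlapConst p * |s - r| ^ (2 * p + 1)) := by
  wlog hrs : r < s generalizing s r
  · rw [abs_sub_comm]
    simp_rw [mul_comm (ENNReal.ofReal (plusPow (s - _) p))]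
    exact this hsr.symm (hsr.lt_or_gt.resolve_right hrs)
  calc ∫⁻ x, ENNReal.ofReal (plusPow (s - x) p) * ENNReal.ofReal (plusPow (r - x) p)
      = ∫⁻ x, ENNReal.ofReal (plusPow ((s - r) + (r - x)) p * plusPow (r - x) p) := by
        simp_rw [sub_add_sub_cancel, ENNReal.ofReal_mul (plusPow_nonneg _ _)]
    _ = ∫⁻ u, ENNReal.ofReal (plusPow ((s - r) + u) p * plusPow u p) :=
        lintegral_sub_left_eq_self
          (fun u => ENNReal.ofReal (plusPow ((s - r) + u) p * plusPow u p)) r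
    _ ≤ ENNReal.ofReal (overlapConst p * |s - r| ^ (2 * p + 1)) := by
        rw [overlapConst, abs_of_pos (sub_pos.2 hrs), two_mul]
        exact lintegral_plusPow_add_mul_plusPow_le (by linarith) hp (by linarith) (sub_pos.2 hrs)

lemma integrableOn_closedBall_abs_rpow {γ : ℝ} (hγ : -1 < γ) (R : ℝ) :
    IntegrableOn (fun u : ℝ => |u| ^ γ) (Metric.closedBall 0 R) := by
  have hmeas : Measurable fun u : ℝ => |u| ^ γ := by fun_prop
  refine (locallyIntegrable_of_norm_le_rpow (μ := volume) (C := 1) (α := -γ) (by simp)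
    (by rw [Module.finrank_self, Nat.cast_one]; linarith) (.of_forall fun u => ?_)
    hmeas.aestronglyMeasurable).integrableOn_isCompact (isCompact_closedBall 0 R)
  rw [neg_neg, one_mul, Real.norm_eq_abs, abs_of_nonneg (by positivity), Real.norm_eq_abs]

lemma lintegral_prod_abs_sub_rpow_lt_top {S : Set ℝ} (hS : Bornology.IsBounded S) {γ : ℝ}
    (hγ : -1 < γ) :
    ∫⁻ w, ENNReal.ofReal (|w.1 - w.2| ^ γ) ∂((volume.restrict S).prod (volume.restrict S))
      < ⊤ := by
  obtain ⟨R, hR⟩ := (Metric.isBounded_iff_subset_closedBall 0).1 hS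
  set B := Metric.closedBall (0 : ℝ) (2 * R)
  set φ := fun u : ℝ => ENNReal.ofReal (|u| ^ γ)
  have hφ : Measurable φ := by fun_prop
  have hsub : ∀ s ∈ S, ∀ r ∈ S, s - r ∈ B := fun s hs r hr => by
    have hs' := mem_closedBall_zero_iff.1 (hR hs)
    have hr' := mem_closedBall_zero_iff.1 (hR hr)
    exact mem_closedBall_zero_iff.2 (by linarith [norm_sub_le s r])
  have hinner : ∀ s ∈ S, ∫⁻ r in S, φ (s - r) ≤ ∫⁻ u in B, φ u := fun s hs =>
    calc ∫⁻ r in S, φ (s - r)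
        ≤ ∫⁻ r in S, B.indicator φ (s - r) :=
          setLIntegral_mono ((hφ.indicator Metric.isClosed_closedBall.measurableSet).comp
            (measurable_const.sub measurable_id))
            fun r hr => (indicator_of_mem (hsub s hs r hr) φ).ge
      _ ≤ ∫⁻ r, B.indicator φ (s - r) := setLIntegral_le_lintegral _ _
      _ = ∫⁻ u in B, φ u := by
          rw [lintegral_sub_left_eq_self (B.indicator φ) s,
            lintegral_indicator Metric.isClosed_closedBall.measurableSet]
  calc ∫⁻ w, φ (w.1 - w.2) ∂((volume.restrict S).prod (volume.restrict S))
      = ∫⁻ s in S, ∫⁻ r in S, φ (s - r) := lintegral_prod _ (by fun_prop)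
    _ ≤ ∫⁻ _ in S, ∫⁻ u in B, φ u := setLIntegral_mono measurable_const hinner
    _ < ⊤ := by
        rw [setLIntegral_const]
        exact ENNReal.mul_lt_top (integrableOn_closedBall_abs_rpow hγ _).lintegral_lt_top
          hS.measure_lt_top

/-- The function `F_{p,q}` of the proof sketch, with `S` in place of `Ι 0 t`. -/
noncomputable def plusPowKernel (S : Set ℝ) (p q : ℝ) (z : ℝ × ℝ) : ℝ≥0∞ :=
  ∫⁻ s in S, ENNReal.ofReal (plusPow (s - z.1) p) * ENNReal.ofReal (plusPow (s - z.2) q)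

@[fun_prop]
lemma measurable_plusPowKernel (S : Set ℝ) (p q : ℝ) : Measurable (plusPowKernel S p q) :=
  Measurable.lintegral_prod_right' (f := fun w : (ℝ × ℝ) × ℝ =>
    ENNReal.ofReal (plusPow (w.2 - w.1.1) p) * ENNReal.ofReal (plusPow (w.2 - w.1.2) q))
    (by fun_prop)

lemma ae_prod_fst_ne_snd (μ ν : Measure ℝ) [SFinite ν] [NullSingletonClass ν] :
    ∀ᵐ w ∂μ.prod ν, w.1 ≠ w.2 :=
  (Measure.ae_prod_iff_ae_ae (measurableSet_eq_fun measurable_fst measurable_snd).compl).2 <|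
    .of_forall fun s =>
      (measure_eq_zero_iff_ae_notMem.1 (measure_singleton s)).mono fun _ hr => Ne.symm hr

lemma lintegral_prod_plusPow_sub_mul_le {p q s r : ℝ} (hp : -1 < p) (hp' : p < -1 / 2)
    (hq : -1 < q) (hq' : q < -1 / 2) (hsr : s ≠ r) :
    ∫⁻ z, (ENNReal.ofReal (plusPow (s - z.1) p) * ENNReal.ofReal (plusPow (s - z.2) q))
        * (ENNReal.ofReal (plusPow (r - z.1) p) * ENNReal.ofReal (plusPow (r - z.2) q))
        ∂(volume.prod volume)
      ≤ ENNReal.ofReal (overlapConst p * overlapConst q)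
        * ENNReal.ofReal (|s - r| ^ (2 * p + 2 * q + 2)) := by
  have hd : 0 < |s - r| := abs_pos.2 (sub_ne_zero.2 hsr)
  calc _ = (∫⁻ x, ENNReal.ofReal (plusPow (s - x) p) * ENNReal.ofReal (plusPow (r - x) p))
          * ∫⁻ y, ENNReal.ofReal (plusPow (s - y) q) * ENNReal.ofReal (plusPow (r - y) q) := by
        rw [← lintegral_prod_mul (by fun_prop) (by fun_prop)]
        exact lintegral_congr fun z => by ring
    _ ≤ ENNReal.ofReal (overlapConst p * |s - r| ^ (2 * p + 1))
          * ENNReal.ofReal (overlapConst q * |s - r| ^ (2 * q + 1)) :=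
        mul_le_mul' (lintegral_plusPow_sub_mul_plusPow_sub_le hp hp' hsr)
          (lintegral_plusPow_sub_mul_plusPow_sub_le hq hq' hsr)
    _ = _ := by
        rw [← ENNReal.ofReal_mul
            (mul_nonneg (overlapConst_nonneg hp hp') (Real.rpow_nonneg hd.le _)),
          ← ENNReal.ofReal_mul
            (mul_nonneg (overlapConst_nonneg hp hp') (overlapConst_nonneg hq hq')),
          show 2 * p + 2 * q + 2 = (2 * p + 1) + (2 * q + 1) by ring,
          Real.rpow_add hd (2 * p + 1)]
        ring_nf

lemma lintegral_plusPowKernel_sq_lt_top {S : Set ℝ} (hS : Bornology.IsBounded S) {p q : ℝ}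
    (hp : -1 < p) (hp' : p < -1 / 2) (hq : -1 < q) (hq' : q < -1 / 2) (hpq : -3 / 2 < p + q) :
    ∫⁻ z, plusPowKernel S p q z ^ 2 ∂(volume.prod volume) < ⊤ := by
  set μS := volume.restrict S
  set e : ℝ → ℝ → ℝ≥0∞ := fun p u => ENNReal.ofReal (plusPow u p)
  have hsq : ∀ z : ℝ × ℝ, plusPowKernel S p q z ^ 2
      = ∫⁻ w, (e p (w.1 - z.1) * e q (w.1 - z.2)) * (e p (w.2 - z.1) * e q (w.2 - z.2))
          ∂μS.prod μS := fun z => by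
    rw [sq]
    exact (lintegral_prod_mul (f := fun s => e p (s - z.1) * e q (s - z.2))
      (g := fun s => e p (s - z.1) * e q (s - z.2)) (by fun_prop) (by fun_prop)).symm
  calc ∫⁻ z, plusPowKernel S p q z ^ 2 ∂(volume.prod volume)
      = ∫⁻ w, ∫⁻ z, (e p (w.1 - z.1) * e q (w.1 - z.2))
          * (e p (w.2 - z.1) * e q (w.2 - z.2)) ∂(volume.prod volume) ∂μS.prod μS := by
        simp_rw [hsq]
        exact lintegral_lintegral_swap (by fun_prop)
    _ ≤ ∫⁻ w, ENNReal.ofReal (overlapConst p * overlapConst q)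
          * ENNReal.ofReal (|w.1 - w.2| ^ (2 * p + 2 * q + 2)) ∂μS.prod μS :=
        lintegral_mono_ae <| (ae_prod_fst_ne_snd μS μS).mono fun _ hw =>
          lintegral_prod_plusPow_sub_mul_le hp hp' hq hq' hw
    _ < ⊤ := by
        rw [lintegral_const_mul _ (by fun_prop)]
        exact ENNReal.mul_lt_top ENNReal.ofReal_lt_top
          (lintegral_prod_abs_sub_rpow_lt_top hS (by linarith))

lemma rosenblattK_nonneg (H₁ H₂ s x y : ℝ) : 0 ≤ rosenblattK H₁ H₂ s x y :=
  add_nonneg (mul_nonneg (plusPow_nonneg _ _) (plusPow_nonneg _ _))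
    (mul_nonneg (plusPow_nonneg _ _) (plusPow_nonneg _ _))

lemma enorm_rosenblattF_le (H₁ H₂ t x y : ℝ) :
    ‖rosenblattF H₁ H₂ t x y‖ₑ
      ≤ plusPowKernel (Ι 0 t) (H₁ / 2 - 1) (H₂ / 2 - 1) (x, y)
        + plusPowKernel (Ι 0 t) (H₂ / 2 - 1) (H₁ / 2 - 1) (x, y) := by
  rw [rosenblattF, ← ofReal_norm, intervalIntegral.norm_integral_eq_norm_integral_uIoc,
    ofReal_norm, plusPowKernel, plusPowKernel, ← lintegral_add_left (by fun_prop)]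
  refine (enorm_integral_le_lintegral_enorm _).trans_eq (lintegral_congr fun s => ?_)
  rw [Real.enorm_of_nonneg (rosenblattK_nonneg _ _ _ _ _), rosenblattK,
    ENNReal.ofReal_add (mul_nonneg (plusPow_nonneg _ _) (plusPow_nonneg _ _))
      (mul_nonneg (plusPow_nonneg _ _) (plusPow_nonneg _ _)),
    ENNReal.ofReal_mul (plusPow_nonneg _ _), ENNReal.ofReal_mul (plusPow_nonneg _ _)]

lemma ofReal_rosenblattF_sq_le (H₁ H₂ t x y : ℝ) :
    ENNReal.ofReal (rosenblattF H₁ H₂ t x y ^ 2)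
      ≤ 2 * (plusPowKernel (Ι 0 t) (H₁ / 2 - 1) (H₂ / 2 - 1) (x, y) ^ 2
        + plusPowKernel (Ι 0 t) (H₂ / 2 - 1) (H₁ / 2 - 1) (x, y) ^ 2) := by
  rw [← sq_abs, ENNReal.ofReal_pow (abs_nonneg _), ← Real.enorm_eq_ofReal_abs]
  have hsq := ENNReal.rpow_add_le_mul_rpow_add_rpow
    (plusPowKernel (Ι 0 t) (H₁ / 2 - 1) (H₂ / 2 - 1) (x, y))
    (plusPowKernel (Ι 0 t) (H₂ / 2 - 1) (H₁ / 2 - 1) (x, y)) (p := 2) one_le_two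
  norm_num at hsq
  exact (pow_le_pow_left' (enorm_rosenblattF_le H₁ H₂ t x y) 2).trans hsq

theorem square_integrable_kernel_general (H₁ H₂ : ℝ) (hH₁ : H₁ ∈ Set.Ioo (1/2 : ℝ) 1)
    (hH₂ : H₂ ∈ Set.Ioo (1/2 : ℝ) 1) (t : ℝ) :
    (∫⁻ x : ℝ, ∫⁻ y : ℝ, ENNReal.ofReal ((rosenblattF H₁ H₂ t x y) ^ 2)) < ⊤ := by
  obtain ⟨h₁, h₁'⟩ := hH₁
  obtain ⟨h₂, h₂'⟩ := hH₂
  have hS : Bornology.IsBounded (Ι 0 t) :=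
    (Metric.isBounded_Icc _ _).subset Ioc_subset_Icc_self
  set K := plusPowKernel (Ι 0 t) (H₁ / 2 - 1) (H₂ / 2 - 1)
  set K' := plusPowKernel (Ι 0 t) (H₂ / 2 - 1) (H₁ / 2 - 1)
  have hK := lintegral_plusPowKernel_sq_lt_top hS (p := H₁ / 2 - 1) (q := H₂ / 2 - 1)
    (by linarith) (by linarith) (by linarith) (by linarith) (by linarith)
  have hK' := lintegral_plusPowKernel_sq_lt_top hS (p := H₂ / 2 - 1) (q := H₁ / 2 - 1)
    (by linarith) (by linarith) (by linarith) (by linarith) (by linarith)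
  calc ∫⁻ x, ∫⁻ y, ENNReal.ofReal (rosenblattF H₁ H₂ t x y ^ 2)
      ≤ ∫⁻ x, ∫⁻ y, 2 * (K (x, y) ^ 2 + K' (x, y) ^ 2) :=
        lintegral_mono fun x => lintegral_mono fun y => ofReal_rosenblattF_sq_le H₁ H₂ t x y
    _ = 2 * (∫⁻ z, K z ^ 2 ∂(volume.prod volume)
          + ∫⁻ z, K' z ^ 2 ∂(volume.prod volume)) := by
        rw [← lintegral_add_left (by fun_prop), ← lintegral_const_mul _ (by fun_prop),
          lintegral_prod _ (by fun_prop)]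
    _ < ⊤ := ENNReal.mul_lt_top (by norm_num) (ENNReal.add_lt_top.2 ⟨hK, hK'⟩)

/-- For all `H₁, H₂ ∈ (1/2, 1)` and `t > 0`, the kernel `f_{H₁,H₂}(t,·,·)` is square
integrable on `ℝ²`. -/
theorem square_integrable_kernel (H₁ H₂ : ℝ) (hH₁ : H₁ ∈ Set.Ioo (1/2 : ℝ) 1)
    (hH₂ : H₂ ∈ Set.Ioo (1/2 : ℝ) 1) (t : ℝ) (ht : 0 < t) :
    (∫⁻ x : ℝ, ∫⁻ y : ℝ, ENNReal.ofReal ((rosenblattF H₁ H₂ t x y) ^ 2)) < ⊤ :=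
  square_integrable_kernel_general H₁ H₂ hH₁ hH₂ t
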